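/- Let Λ be countable, (κ_λ)_λ ∈ (0,∞)^Λ with sup_λ κ_λ < ∞, and let (φ_α)_{α>0} be a non-linear regularizing filter satisfying Assumption C with parameter γ ∈ (0, 1/sup_λ κ_λ²) and contraction factors ℓ_α ∈ (0,1). For each α and λ choose a proper, convex, lower semicontinuous s_{α,λ} : ℝ → [0,∞] with s_{α,λ}(0) = 0 and prox_{s_{α,λ}} = φ_α(κ_λ,·), and define D_α : ℓ²(Λ) → ℓ²(Λ) componentwise by D_α((x_λ)_λ) := (prox_{γ·s_{α,λ}(κ_λ·)}(x_λ))_λ. Then (D_α)_{α>0} is an admissible family of denoisers: (D1) each D_α is Lipschitz with constant ℓ_α < 1; (D2) for every x ∈ ℓ²(Λ), D_α(x) → x in norm as α → 0 (and ℓ_α → 1 as α → 0); (D3) for every bounded set B ⊆ ℓ²(Λ) and every z ∈ ℓ²(Λ), sup_{x∈B} ⟨D_α(x) − x, z⟩ → 0 as α → 0; (D4) for every x ∈ ℓ²(Λ) there is M_x < ∞ with ‖x − D_α(x)‖/(1 − Lip(D_α)) ≤ M_x for all sufficiently small α > 0. -/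

import Mathlib

/-!
Write `τ = γκ²`. The proximity operator `ψ` of `γ s(κ ·)` and `φ = prox_s` are linked by
`φ(κψ(x) + (x − ψ(x))/(γκ)) = κψ(x)`: both sides encode `x − ψ(x) ∈ γκ ∂s(κψ(x))`.
As `ψ` is firmly nonexpansive, `ψx − ψy`, `x − y` and the difference of the arguments of `φ`
all have the same sign, so the Lipschitz bound (C1) and the lower bound (C2) on `φ` become
`|ψx − ψy| ≤ ℓ|x − y|` and `|ψx − x| ≤ C(1 − ℓ)|x|`; the constant `τt/(1 − t(1 − τ))` is exactly
what this change of variables does to a constant `t`. Applied componentwise this gives (D1), and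
once `ℓ_α → 1` (forced by (C1) and (F4) at the point `1`) the residual bound
`‖D_α x − x‖ ≤ C(1 − ℓ_α)‖x‖` gives (D2)–(D4).
-/

open scoped ENNReal RealInnerProductSpace
open Filter

noncomputable section

/-- `p` is the (unique) proximal point at `x` of the `[0,∞]`-valued functional `s`. -/
def IsProxPtE (s : ℝ → ℝ≥0∞) (x p : ℝ) : Prop :=
  (∀ y : ℝ, ENNReal.ofReal ((x - p) ^ 2 / 2) + s p ≤ ENNReal.ofReal ((x - y) ^ 2 / 2) + s y) ∧
  ∀ q : ℝ, (∀ y : ℝ, ENNReal.ofReal ((x - q) ^ 2 / 2) + s q ≤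
    ENNReal.ofReal ((x - y) ^ 2 / 2) + s y) → q = p

/-- Convexity for `[0,∞]`-valued functions on `ℝ`. -/
def ENNConvexOn (s : ℝ → ℝ≥0∞) : Prop :=
  ∀ x y : ℝ, ∀ a b : ℝ, 0 ≤ a → 0 ≤ b → a + b = 1 →
    s (a * x + b * y) ≤ ENNReal.ofReal a * s x + ENNReal.ofReal b * s y

/-- A non-linear regularizing filter: `φ α κ` is (F1) monotone, (F2) nonexpansive,
(F3) zero at zero, and (F4) converges pointwise to the identity as `α → 0`. -/
def IsRegFilter (φ : ℝ → ℝ → ℝ → ℝ) : Prop :=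
  (∀ α > (0 : ℝ), ∀ κ > (0 : ℝ), Monotone (φ α κ)) ∧
  (∀ α > (0 : ℝ), ∀ κ > (0 : ℝ), ∀ x y : ℝ, |φ α κ x - φ α κ y| ≤ |x - y|) ∧
  (∀ α > (0 : ℝ), ∀ κ > (0 : ℝ), φ α κ 0 = 0) ∧
  (∀ κ > (0 : ℝ), ∀ c : ℝ,
    Tendsto (fun α => φ α κ c) (nhdsWithin 0 (Set.Ioi 0)) (nhds c))

/-- Assumption B: (B1) `α ↦ |φ_α(κ,x)|` increases as `α` decreases, and (B2) there are
`d, e > 0` with `|φ_α(κ,x)| ≤ (eκ/√α)·|x|` whenever `|x| ≤ dα/κ`. -/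
def AssumptionB (φ : ℝ → ℝ → ℝ → ℝ) : Prop :=
  (∀ κ > (0 : ℝ), ∀ x : ℝ, ∀ α β : ℝ, 0 < α → α ≤ β → |φ β κ x| ≤ |φ α κ x|) ∧
  (∃ d > (0 : ℝ), ∃ e > (0 : ℝ), ∀ κ > (0 : ℝ), ∀ α > (0 : ℝ), ∀ x : ℝ,
    |x| ≤ d * α / κ → |φ α κ x| ≤ e * κ / Real.sqrt α * |x|)

open Topology

namespace IsProxPtE

variable {g : ℝ → ℝ≥0∞} {x p : ℝ}

lemma ne_top (h : IsProxPtE g x p) {y : ℝ} (hy : g y ≠ ⊤) : g p ≠ ⊤ := by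
  intro hp
  have hmin := h.1 y
  rw [hp, add_top, top_le_iff] at hmin
  exact ENNReal.add_ne_top.2 ⟨ENNReal.ofReal_ne_top, hy⟩ hmin

/-- The variational inequality `x - p ∈ ∂g(p)` characterising `p = prox_g x`. -/
lemma inner_le (hg : ENNConvexOn g) (h : IsProxPtE g x p) {y : ℝ} (hy : g y ≠ ⊤) :
    (x - p) * (y - p) + (g p).toReal ≤ (g y).toReal := by
  set a := (g p).toReal
  set b := (g y).toReal
  have hpa : g p = ENNReal.ofReal a := (ENNReal.ofReal_toReal (h.ne_top hy)).symm
  have hyb : g y = ENNReal.ofReal b := (ENNReal.ofReal_toReal hy).symm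
  have ha : 0 ≤ a := ENNReal.toReal_nonneg
  have hb : 0 ≤ b := ENNReal.toReal_nonneg
  -- compare `p` with the point `p + t (y - p)` of the segment towards `y`
  have hseg : ∀ t ∈ Set.Ioc (0 : ℝ) 1,
      (x - p) * (y - p) + a - b ≤ t * ((y - p) ^ 2 / 2) := by
    rintro t ⟨ht0, ht1⟩
    have hconv := hg p y (1 - t) t (by linarith) ht0.le (by ring)
    rw [hpa, hyb, ← ENNReal.ofReal_mul (by linarith), ← ENNReal.ofReal_mul ht0.le,
      ← ENNReal.ofReal_add (by nlinarith) (by positivity)] at hconv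
    have hmin := (h.1 ((1 - t) * p + t * y)).trans (add_le_add_right hconv _)
    rw [hpa, ← ENNReal.ofReal_add (by positivity) ha,
      ← ENNReal.ofReal_add (by positivity) (by nlinarith),
      ENNReal.ofReal_le_ofReal_iff (by nlinarith)] at hmin
    have : t * ((x - p) * (y - p) + a - b - t * ((y - p) ^ 2 / 2)) ≤ 0 := by nlinarith
    nlinarith
  have hlim : Tendsto (fun t : ℝ => t * ((y - p) ^ 2 / 2)) (𝓝[>] 0) (𝓝 0) :=
    ((continuous_mul_const _).tendsto' 0 0 (zero_mul _)).mono_left nhdsWithin_le_nhds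
  have := ge_of_tendsto hlim (Filter.mem_of_superset (Ioc_mem_nhdsGT one_pos) hseg)
  linarith

lemma of_inner_le (hp : g p ≠ ⊤)
    (hvar : ∀ y, g y ≠ ⊤ → (x - p) * (y - p) + (g p).toReal ≤ (g y).toReal) (y : ℝ) :
    ENNReal.ofReal ((x - p) ^ 2 / 2) + g p ≤ ENNReal.ofReal ((x - y) ^ 2 / 2) + g y := by
  by_cases hy : g y = ⊤
  · simp [hy]
  rw [← ENNReal.ofReal_toReal hp, ← ENNReal.ofReal_toReal hy,
    ← ENNReal.ofReal_add (by positivity) ENNReal.toReal_nonneg,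
    ← ENNReal.ofReal_add (by positivity) ENNReal.toReal_nonneg]
  exact ENNReal.ofReal_le_ofReal (by nlinarith [hvar y hy, sq_nonneg (y - p)])

lemma sq_sub_le_mul (hg : ENNConvexOn g) {y q z : ℝ} (hx : IsProxPtE g x p)
    (hy : IsProxPtE g y q) (hz : g z ≠ ⊤) : (p - q) ^ 2 ≤ (x - y) * (p - q) := by
  nlinarith [hx.inner_le hg (hy.ne_top hz), hy.inner_le hg (hx.ne_top hz)]

end IsProxPtE

lemma ENNConvexOn.const_mul_comp_mul {S : ℝ → ℝ≥0∞} (hS : ENNConvexOn S) (c k : ℝ) :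
    ENNConvexOn fun y => ENNReal.ofReal c * S (k * y) := by
  intro x y a b ha hb hab
  calc ENNReal.ofReal c * S (k * (a * x + b * y))
      = ENNReal.ofReal c * S (a * (k * x) + b * (k * y)) := by ring_nf
    _ ≤ ENNReal.ofReal c * (ENNReal.ofReal a * S (k * x) + ENNReal.ofReal b * S (k * y)) :=
        mul_le_mul_right (hS _ _ a b ha hb hab) _
    _ = _ := by ring

lemma abs_le_abs_of_sq_le_mul {a b : ℝ} (h : a ^ 2 ≤ b * a) : |a| ≤ |b| := by
  rcases le_total 0 b with hb | hb
  · rw [abs_of_nonneg hb, abs_le]; constructor <;> nlinarith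
  · rw [abs_of_nonpos hb, abs_le]; constructor <;> nlinarith

lemma abs_mul_add_sub_of_sq_le_mul {a b τ : ℝ} (hτ : 0 ≤ τ) (h : a ^ 2 ≤ b * a) :
    |τ * a + (b - a)| = τ * |a| + (|b| - |a|) := by
  rcases le_total 0 b with hb | hb
  · have ha : 0 ≤ a := by nlinarith
    have hab : a ≤ b := by nlinarith
    rw [abs_of_nonneg (by positivity), abs_of_nonneg ha, abs_of_nonneg hb]
  · have ha : a ≤ 0 := by nlinarith
    have hab : b ≤ a := by nlinarith
    rw [abs_of_nonpos (by nlinarith), abs_of_nonpos ha, abs_of_nonpos hb]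
    ring

-- The Lipschitz constant of `prox_S` that corresponds to the constant `t` of `prox_{γ S(k ·)}`,
-- where `τ = γ k²`.
def proxGain (τ t : ℝ) : ℝ := τ * t / (1 - t * (1 - τ))

section proxGain

variable {τ t : ℝ}

lemma one_sub_mul_one_sub_pos (hτ : 0 < τ) (ht0 : 0 ≤ t) (ht1 : t < 1) :
    0 < 1 - t * (1 - τ) := by
  nlinarith

-- `τ A (1 - t (1 - τ)) - τ t (τ A + B - A) = τ (A - t B)`
lemma mul_le_proxGain_mul_iff (hτ : 0 < τ) (ht0 : 0 ≤ t) (ht1 : t < 1) {A B : ℝ} :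
    τ * A ≤ proxGain τ t * (τ * A + (B - A)) ↔ A ≤ t * B := by
  rw [proxGain, div_mul_eq_mul_div, le_div_iff₀ (one_sub_mul_one_sub_pos hτ ht0 ht1)]
  constructor <;> intro h <;> nlinarith

lemma proxGain_mul_le_mul_iff (hτ : 0 < τ) (ht0 : 0 ≤ t) (ht1 : t < 1) {A B : ℝ} :
    proxGain τ t * (τ * A + (B - A)) ≤ τ * A ↔ t * B ≤ A := by
  rw [proxGain, div_mul_eq_mul_div, div_le_iff₀ (one_sub_mul_one_sub_pos hτ ht0 ht1)]
  constructor <;> intro h <;> nlinarith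

lemma div_le_of_le_proxGain (hτ : 0 < τ) (ht0 : 0 ≤ t) (ht1 : t < 1) {s : ℝ} (hs : 0 ≤ s)
    (h : s ≤ proxGain τ t) : s / (τ + s * (1 - τ)) ≤ t := by
  have hden := one_sub_mul_one_sub_pos hτ ht0 ht1
  rw [proxGain, le_div_iff₀ hden] at h
  have hs1 : s < 1 := by nlinarith
  rw [div_le_iff₀ (by nlinarith)]
  nlinarith

lemma tendsto_one_of_lipschitz_proxGain {φ : ℝ → ℝ → ℝ} {ℓ : ℝ → ℝ} (hτ : 0 < τ)
    (hφ0 : ∀ α > (0 : ℝ), φ α 0 = 0) (hφ1 : Tendsto (fun α => φ α 1) (𝓝[>] 0) (𝓝 1))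
    (hℓ : ∀ α > (0 : ℝ), 0 < ℓ α ∧ ℓ α < 1)
    (hφ : ∀ α > (0 : ℝ), ∀ x y, |φ α x - φ α y| ≤ proxGain τ (ℓ α) * |x - y|) :
    Tendsto ℓ (𝓝[>] 0) (𝓝 1) := by
  have hlow : Tendsto (fun α => |φ α 1| / (τ + |φ α 1| * (1 - τ))) (𝓝[>] 0) (𝓝 1) := by
    have h := hφ1.abs.div (tendsto_const_nhds.add (hφ1.abs.mul_const (1 - τ)))
      (by simp : τ + |1| * (1 - τ) ≠ 0)
    rwa [show |(1 : ℝ)| / (τ + |1| * (1 - τ)) = 1 by simp] at h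
  refine tendsto_of_tendsto_of_tendsto_of_le_of_le' hlow tendsto_const_nhds ?_ ?_
  all_goals filter_upwards [self_mem_nhdsWithin] with α hα
  · refine div_le_of_le_proxGain hτ (hℓ α hα).1.le (hℓ α hα).2 (abs_nonneg _) ?_
    simpa [hφ0 α hα] using hφ α hα 1 0
  · exact (hℓ α hα).2.le

end proxGain

section ScaledProx

variable {S : ℝ → ℝ≥0∞} {f ψ : ℝ → ℝ} {k γ : ℝ}

lemma scaledProx_zero (hS0 : S 0 = 0)
    (hψ : ∀ x, IsProxPtE (fun y => ENNReal.ofReal γ * S (k * y)) x (ψ x)) : ψ 0 = 0 :=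
  ((hψ 0).2 0 fun y => by simp [hS0]).symm

lemma scaledProx_sq_sub_le (hS : ENNConvexOn S) (hS0 : S 0 = 0)
    (hψ : ∀ x, IsProxPtE (fun y => ENNReal.ofReal γ * S (k * y)) x (ψ x)) (x y : ℝ) :
    (ψ x - ψ y) ^ 2 ≤ (x - y) * (ψ x - ψ y) :=
  (hψ x).sq_sub_le_mul (hS.const_mul_comp_mul γ k) (hψ y) (z := 0) (by simp [hS0])

lemma abs_scaledProx_le (hS : ENNConvexOn S) (hS0 : S 0 = 0)
    (hψ : ∀ x, IsProxPtE (fun y => ENNReal.ofReal γ * S (k * y)) x (ψ x)) (x : ℝ) :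
    |ψ x| ≤ |x| :=
  abs_le_abs_of_sq_le_mul (by
    simpa [scaledProx_zero hS0 hψ] using scaledProx_sq_sub_le hS hS0 hψ x 0)

/-- For `ψ = prox_{γ S(k ·)}`, the point at which `prox_S` takes the value `k ψ(x)`. -/
def proxLift (k γ : ℝ) (ψ : ℝ → ℝ) (x : ℝ) : ℝ := k * ψ x + (x - ψ x) / (γ * k)

/-- The subgradient `x - ψ x ∈ γ k ∂S(k ψ x)` read as `proxLift x - k ψ x ∈ ∂S(k ψ x)`. -/
lemma prox_proxLift (hk : 0 < k) (hγ : 0 < γ) (hS : ENNConvexOn S) (hS0 : S 0 = 0)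
    (hf : ∀ x, IsProxPtE S x (f x))
    (hψ : ∀ x, IsProxPtE (fun y => ENNReal.ofReal γ * S (k * y)) x (ψ x)) (x : ℝ) :
    f (proxLift k γ ψ x) = k * ψ x := by
  have hSp : S (k * ψ x) ≠ ⊤ := by
    have := (hψ x).ne_top (y := 0) (by simp [hS0])
    intro h
    simp [h, hγ] at this
  refine ((hf _).2 _ (IsProxPtE.of_inner_le hSp fun z hz => ?_)).symm
  have hvar := (hψ x).inner_le (hS.const_mul_comp_mul γ k) (y := z / k)
    (by simpa [mul_div_cancel₀ _ hk.ne'] using ENNReal.mul_ne_top ENNReal.ofReal_ne_top hz)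
  simp only [mul_div_cancel₀ _ hk.ne', ENNReal.toReal_mul, ENNReal.toReal_ofReal hγ.le] at hvar
  have e : (x - ψ x) * (z / k - ψ x) =
      γ * ((proxLift k γ ψ x - k * ψ x) * (z - k * ψ x)) := by
    simp only [proxLift]
    field_simp
    ring
  rw [e, ← mul_add] at hvar
  exact le_of_mul_le_mul_left hvar hγ

lemma mul_abs_proxLift_sub (hk : 0 < k) (hγ : 0 < γ) (hS : ENNConvexOn S) (hS0 : S 0 = 0)
    (hψ : ∀ x, IsProxPtE (fun y => ENNReal.ofReal γ * S (k * y)) x (ψ x)) (x y : ℝ) :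
    γ * k * |proxLift k γ ψ x - proxLift k γ ψ y| =
      γ * k ^ 2 * |ψ x - ψ y| + (|x - y| - |ψ x - ψ y|) := by
  have e : γ * k * (proxLift k γ ψ x - proxLift k γ ψ y) =
      γ * k ^ 2 * (ψ x - ψ y) + ((x - y) - (ψ x - ψ y)) := by
    simp only [proxLift]
    field_simp
    ring
  rw [← abs_of_pos (by positivity : 0 < γ * k), ← abs_mul, e]
  exact abs_mul_add_sub_of_sq_le_mul (by positivity) (scaledProx_sq_sub_le hS hS0 hψ x y)

lemma abs_scaledProx_sub_le (hk : 0 < k) (hγ : 0 < γ) (hS : ENNConvexOn S) (hS0 : S 0 = 0)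
    (hf : ∀ x, IsProxPtE S x (f x))
    (hψ : ∀ x, IsProxPtE (fun y => ENNReal.ofReal γ * S (k * y)) x (ψ x))
    {L : ℝ} (hL0 : 0 ≤ L) (hL1 : L < 1)
    (hLip : ∀ u v, |f u - f v| ≤ proxGain (γ * k ^ 2) L * |u - v|) (x y : ℝ) :
    |ψ x - ψ y| ≤ L * |x - y| := by
  have h := hLip (proxLift k γ ψ x) (proxLift k γ ψ y)
  rw [prox_proxLift hk hγ hS hS0 hf hψ, prox_proxLift hk hγ hS hS0 hf hψ, ← mul_sub, abs_mul,
    abs_of_pos hk] at h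
  rw [← mul_le_proxGain_mul_iff (τ := γ * k ^ 2) (by positivity) hL0 hL1,
    ← mul_abs_proxLift_sub hk hγ hS hS0 hψ]
  calc γ * k ^ 2 * |ψ x - ψ y| = γ * k * (k * |ψ x - ψ y|) := by ring
    _ ≤ γ * k * (proxGain (γ * k ^ 2) L * |proxLift k γ ψ x - proxLift k γ ψ y|) := by
      gcongr
    _ = _ := by ring

lemma abs_scaledProx_sub_self_le (hk : 0 < k) (hγ : 0 < γ) (hS : ENNConvexOn S)
    (hS0 : S 0 = 0) (hf : ∀ x, IsProxPtE S x (f x))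
    (hψ : ∀ x, IsProxPtE (fun y => ENNReal.ofReal γ * S (k * y)) x (ψ x))
    {t : ℝ} (ht0 : 0 ≤ t) (ht1 : t < 1)
    (hlow : ∀ u, proxGain (γ * k ^ 2) t * |u| ≤ |f u|) (x : ℝ) :
    |ψ x - x| ≤ (1 - t) * |x| := by
  have hψ0 := scaledProx_zero hS0 hψ
  have hV := mul_abs_proxLift_sub hk hγ hS hS0 hψ x 0
  rw [show proxLift k γ ψ 0 = 0 by simp [proxLift, hψ0], hψ0, sub_zero, sub_zero,
    sub_zero] at hV
  have h := hlow (proxLift k γ ψ x)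
  rw [prox_proxLift hk hγ hS hS0 hf hψ, abs_mul, abs_of_pos hk] at h
  have ht : t * |x| ≤ |ψ x| := by
    rw [← proxGain_mul_le_mul_iff (τ := γ * k ^ 2) (by positivity) ht0 ht1, ← hV]
    calc proxGain (γ * k ^ 2) t * (γ * k * |proxLift k γ ψ x|)
        = γ * k * (proxGain (γ * k ^ 2) t * |proxLift k γ ψ x|) := by ring
      _ ≤ γ * k * (k * |ψ x|) := by gcongr
      _ = γ * k ^ 2 * |ψ x| := by ring
  have hsq := scaledProx_sq_sub_le hS hS0 hψ x 0
  rw [hψ0, sub_zero, sub_zero] at hsq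
  have hsub : |x - ψ x| = |x| - |ψ x| := by
    simpa using abs_mul_add_sub_of_sq_le_mul le_rfl hsq
  rw [abs_sub_comm, hsub]
  linarith

end ScaledProx

namespace lp

variable {Λ : Type*} {p : ℝ≥0∞}

def componentwise (ψ : Λ → ℝ → ℝ) (hψ : ∀ l t, |ψ l t| ≤ |t|) (x : lp (fun _ : Λ => ℝ) p) :
    lp (fun _ : Λ => ℝ) p :=
  ⟨fun l => ψ l (x l), (lp.memℓp x).mono' fun l => by
    simpa only [Real.norm_eq_abs] using hψ l (x l)⟩

@[simp]
lemma componentwise_apply (ψ : Λ → ℝ → ℝ) (hψ : ∀ l t, |ψ l t| ≤ |t|)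
    (x : lp (fun _ : Λ => ℝ) p) (l : Λ) : componentwise ψ hψ x l = ψ l (x l) :=
  rfl

lemma norm_le_mul_norm_of_forall_abs_le [Fact (1 ≤ p)] {u v : lp (fun _ : Λ => ℝ) p} {c : ℝ}
    (hc : 0 ≤ c) (h : ∀ l, |u l| ≤ c * |v l|) : ‖u‖ ≤ c * ‖v‖ :=
  calc ‖u‖ ≤ ‖c • v‖ := lp.norm_mono (zero_lt_one.trans_le Fact.out).ne' fun l => by
        simpa [Real.norm_eq_abs, abs_mul, abs_of_nonneg hc] using h l
    _ = c * ‖v‖ := by rw [norm_smul, Real.norm_of_nonneg hc]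

end lp

lemma Real.abs_iSup_le {ι : Sort*} {f : ι → ℝ} {a : ℝ} (ha : 0 ≤ a) (hf : ∀ i, |f i| ≤ a) :
    |⨆ i, f i| ≤ a := by
  rw [abs_le]
  refine ⟨?_, Real.iSup_le (fun i => (abs_le.1 (hf i)).2) ha⟩
  rcases isEmpty_or_nonempty ι with hι | ⟨⟨i⟩⟩
  · simpa [Real.iSup_of_isEmpty] using ha
  · exact (abs_le.1 (hf i)).1.trans
      (le_ciSup ⟨a, Set.forall_mem_range.2 fun j => (abs_le.1 (hf j)).2⟩ i)

section Denoiser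

variable {E : Type*} [NormedAddCommGroup E] {ι : Type*} {F : Filter ι}
  {D : ι → E → E} {ε : ι → ℝ}

lemma tendsto_norm_sub_self_of_le (hε : Tendsto ε F (𝓝 0))
    (hD : ∀ᶠ i in F, ∀ x, ‖D i x - x‖ ≤ ε i * ‖x‖) (x : E) :
    Tendsto (fun i => ‖D i x - x‖) F (𝓝 0) :=
  squeeze_zero' (.of_forall fun _ => norm_nonneg _) (hD.mono fun _ h => h x)
    (by simpa using hε.mul_const ‖x‖)

lemma tendsto_biSup_inner_sub_self_of_le [InnerProductSpace ℝ E] (hε : Tendsto ε F (𝓝 0))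
    (hD : ∀ᶠ i in F, ∀ x, ‖D i x - x‖ ≤ ε i * ‖x‖) {B : Set E} (hB : Bornology.IsBounded B)
    (z : E) : Tendsto (fun i => ⨆ x ∈ B, ⟪D i x - x, z⟫) F (𝓝 0) := by
  obtain ⟨R, hR0, hR⟩ := hB.exists_pos_norm_le
  refine squeeze_zero_norm' ?_ (by simpa using hε.abs.mul_const (R * ‖z‖))
  filter_upwards [hD] with i hi
  have hbound : ∀ x ∈ B, |⟪D i x - x, z⟫| ≤ |ε i| * (R * ‖z‖) := fun x hx =>
    calc |⟪D i x - x, z⟫| ≤ ‖D i x - x‖ * ‖z‖ := abs_real_inner_le_norm _ _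
      _ ≤ ε i * ‖x‖ * ‖z‖ := by gcongr; exact hi x
      _ ≤ |ε i| * R * ‖z‖ := by gcongr; exacts [le_abs_self _, hR x hx]
      _ = |ε i| * (R * ‖z‖) := mul_assoc _ _ _
  rw [Real.norm_eq_abs]
  exact Real.abs_iSup_le (by positivity) fun x =>
    Real.abs_iSup_le (by positivity) fun hx => hbound x hx

end Denoiser

theorem statement12_general {Λ : Type*} [Nonempty Λ]
    (κ : Λ → ℝ) (hκ : ∀ l, 0 < κ l)
    (φ : ℝ → ℝ → ℝ → ℝ) (hfilter : IsRegFilter φ)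
    (γ : ℝ) (hγ0 : 0 < γ)
    (ℓ : ℝ → ℝ) (hℓ : ∀ α > (0 : ℝ), 0 < ℓ α ∧ ℓ α < 1)
    (hC1 : ∀ α > (0 : ℝ), ∀ l : Λ, ∀ x y : ℝ,
      |φ α (κ l) x - φ α (κ l) y| ≤
        γ * κ l ^ 2 * ℓ α / (1 - ℓ α * (1 - γ * κ l ^ 2)) * |x - y|)
    (hC2 : ∃ C : ℝ, 1 ≤ C ∧ ∀ l : Λ, ∀ α > (0 : ℝ), C ≤ 1 / (1 - ℓ α) →
      ∀ x : ℝ, γ * κ l ^ 2 * (1 - C * (1 - ℓ α)) /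
          (1 - (1 - C * (1 - ℓ α)) * (1 - γ * κ l ^ 2)) * |x| ≤ |φ α (κ l) x|)
    (s : ℝ → Λ → ℝ → ℝ≥0∞)
    (hs : ∀ α > (0 : ℝ), ∀ l : Λ, (∃ x, s α l x ≠ ⊤) ∧ ENNConvexOn (s α l) ∧
      LowerSemicontinuous (s α l) ∧ s α l 0 = 0 ∧
      ∀ x : ℝ, IsProxPtE (s α l) x (φ α (κ l) x))
    (ψ : ℝ → Λ → ℝ → ℝ)
    (hψ : ∀ α > (0 : ℝ), ∀ l : Λ, ∀ x : ℝ,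
      IsProxPtE (fun y => ENNReal.ofReal γ * s α l (κ l * y)) x (ψ α l x)) :
    ∃ D : ℝ → lp (fun _ : Λ => ℝ) 2 → lp (fun _ : Λ => ℝ) 2,
      (∀ α > (0 : ℝ), ∀ x : lp (fun _ : Λ => ℝ) 2, ∀ l : Λ, (D α x) l = ψ α l (x l)) ∧
      (∀ α > (0 : ℝ), ∀ x y : lp (fun _ : Λ => ℝ) 2, ‖D α x - D α y‖ ≤ ℓ α * ‖x - y‖) ∧
      (∀ x : lp (fun _ : Λ => ℝ) 2,
        Tendsto (fun α => ‖D α x - x‖) (nhdsWithin 0 (Set.Ioi 0)) (nhds 0)) ∧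
      Tendsto ℓ (nhdsWithin 0 (Set.Ioi 0)) (nhds 1) ∧
      (∀ B : Set (lp (fun _ : Λ => ℝ) 2), Bornology.IsBounded B →
        ∀ z : lp (fun _ : Λ => ℝ) 2,
          Tendsto (fun α => ⨆ x ∈ B, ⟪D α x - x, z⟫) (nhdsWithin 0 (Set.Ioi 0)) (nhds 0)) ∧
      (∀ x : lp (fun _ : Λ => ℝ) 2, ∃ M : ℝ,
        ∀ᶠ α in nhdsWithin 0 (Set.Ioi 0), ‖x - D α x‖ / (1 - ℓ α) ≤ M) := by
  obtain ⟨-, -, hφ0, hφlim⟩ := hfilter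
  obtain ⟨C, hC, hC2⟩ := hC2
  have hψ_abs (α : ℝ) (hα : 0 < α) (l : Λ) (t : ℝ) : |ψ α l t| ≤ |t| :=
    have ⟨_, hconv, _, hs0, _⟩ := hs α hα l
    abs_scaledProx_le hconv hs0 (hψ α hα l) t
  have hψ_lip (α : ℝ) (hα : 0 < α) (l : Λ) (t u : ℝ) : |ψ α l t - ψ α l u| ≤ ℓ α * |t - u| :=
    have ⟨_, hconv, _, hs0, hprox⟩ := hs α hα l
    abs_scaledProx_sub_le (hκ l) hγ0 hconv hs0 hprox (hψ α hα l) (hℓ α hα).1.le (hℓ α hα).2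
      (hC1 α hα l) t u
  have hψ_res (α : ℝ) (hα : 0 < α) (hCℓ : C * (1 - ℓ α) ≤ 1) (l : Λ) (t : ℝ) :
      |ψ α l t - t| ≤ C * (1 - ℓ α) * |t| := by
    obtain ⟨_, hconv, _, hs0, hprox⟩ := hs α hα l
    obtain ⟨hℓ0, hℓ1⟩ := hℓ α hα
    have hC2' := hC2 l α hα ((le_div_iff₀ (by linarith)).2 (by linarith))
    simpa using abs_scaledProx_sub_self_le (hκ l) hγ0 hconv hs0 hprox (hψ α hα l)
      (by linarith) (by nlinarith) hC2' t
  let D (α : ℝ) (x : lp (fun _ : Λ => ℝ) 2) : lp (fun _ : Λ => ℝ) 2 :=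
    if hα : 0 < α then lp.componentwise (ψ α) (hψ_abs α hα) x else x
  have hD (α : ℝ) (hα : 0 < α) (x : lp (fun _ : Λ => ℝ) 2) (l : Λ) : D α x l = ψ α l (x l) := by
    simp [D, hα]
  have hℓlim : Tendsto ℓ (𝓝[>] 0) (𝓝 1) := by
    obtain ⟨l⟩ := ‹Nonempty Λ›
    exact tendsto_one_of_lipschitz_proxGain (by have := hκ l; positivity)
      (fun α hα => hφ0 α hα _ (hκ l)) (hφlim _ (hκ l) 1) hℓ fun α hα => hC1 α hα l
  have hε : Tendsto (fun α => C * (1 - ℓ α)) (𝓝[>] 0) (𝓝 0) := by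
    simpa using ((tendsto_const_nhds (x := (1 : ℝ))).sub hℓlim).const_mul C
  have hres : ∀ᶠ α in 𝓝[>] 0, ∀ x, ‖D α x - x‖ ≤ C * (1 - ℓ α) * ‖x‖ := by
    filter_upwards [self_mem_nhdsWithin, hε.eventually (eventually_le_nhds one_pos)]
      with α hα hCℓ x
    refine lp.norm_le_mul_norm_of_forall_abs_le (by nlinarith [hℓ α hα]) fun l => ?_
    simpa [hD α hα] using hψ_res α hα hCℓ l (x l)
  refine ⟨D, hD, fun α hα x y => ?_, tendsto_norm_sub_self_of_le hε hres, hℓlim,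
    fun B hB z => tendsto_biSup_inner_sub_self_of_le hε hres hB z, fun x => ⟨C * ‖x‖, ?_⟩⟩
  · refine lp.norm_le_mul_norm_of_forall_abs_le (hℓ α hα).1.le fun l => ?_
    simpa [hD α hα] using hψ_lip α hα l (x l) (y l)
  · filter_upwards [self_mem_nhdsWithin, hres] with α hα h
    rw [div_le_iff₀ (by linarith [(hℓ α hα).2]), norm_sub_rev]
    linarith [h x]

/-- **Reduction to PnP: admissible denoisers.** Under Assumption C, the
componentwise proximity operators `D_α = (prox_{γ·s_{α,λ}(κ_λ·)})_λ` form an admissible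
family of denoisers on `ℓ²(Λ)`: (D1) `D_α` is a contraction with constant `ℓ_α < 1`;
(D2) `D_α x → x` in norm as `α → 0` (and `ℓ_α → 1`); (D3) uniform weak convergence on
bounded sets; (D4) `‖x − D_α x‖/(1 − ℓ_α)` stays bounded as `α → 0`. -/
theorem statement12 {Λ : Type*} [Countable Λ] [Nonempty Λ]
    (κ : Λ → ℝ) (hκ : ∀ l, 0 < κ l) (hκbd : BddAbove (Set.range fun l => κ l ^ 2))
    (φ : ℝ → ℝ → ℝ → ℝ) (hfilter : IsRegFilter φ)
    (γ : ℝ) (hγ0 : 0 < γ) (hγ1 : γ < 1 / sSup (Set.range fun l => κ l ^ 2))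
    (ℓ : ℝ → ℝ) (hℓ : ∀ α > (0 : ℝ), 0 < ℓ α ∧ ℓ α < 1)
    (hC1 : ∀ α > (0 : ℝ), ∀ l : Λ, ∀ x y : ℝ,
      |φ α (κ l) x - φ α (κ l) y| ≤
        γ * κ l ^ 2 * ℓ α / (1 - ℓ α * (1 - γ * κ l ^ 2)) * |x - y|)
    (hC2 : ∃ C : ℝ, 1 ≤ C ∧ ∀ l : Λ, ∀ α > (0 : ℝ), C ≤ 1 / (1 - ℓ α) →
      ∀ x : ℝ, γ * κ l ^ 2 * (1 - C * (1 - ℓ α)) /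
          (1 - (1 - C * (1 - ℓ α)) * (1 - γ * κ l ^ 2)) * |x| ≤ |φ α (κ l) x|)
    (s : ℝ → Λ → ℝ → ℝ≥0∞)
    (hs : ∀ α > (0 : ℝ), ∀ l : Λ, (∃ x, s α l x ≠ ⊤) ∧ ENNConvexOn (s α l) ∧
      LowerSemicontinuous (s α l) ∧ s α l 0 = 0 ∧
      ∀ x : ℝ, IsProxPtE (s α l) x (φ α (κ l) x))
    (ψ : ℝ → Λ → ℝ → ℝ)
    (hψ : ∀ α > (0 : ℝ), ∀ l : Λ, ∀ x : ℝ,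
      IsProxPtE (fun y => ENNReal.ofReal γ * s α l (κ l * y)) x (ψ α l x)) :
    ∃ D : ℝ → lp (fun _ : Λ => ℝ) 2 → lp (fun _ : Λ => ℝ) 2,
      (∀ α > (0 : ℝ), ∀ x : lp (fun _ : Λ => ℝ) 2, ∀ l : Λ, (D α x) l = ψ α l (x l)) ∧
      (∀ α > (0 : ℝ), ∀ x y : lp (fun _ : Λ => ℝ) 2, ‖D α x - D α y‖ ≤ ℓ α * ‖x - y‖) ∧
      (∀ x : lp (fun _ : Λ => ℝ) 2,
        Tendsto (fun α => ‖D α x - x‖) (nhdsWithin 0 (Set.Ioi 0)) (nhds 0)) ∧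
      Tendsto ℓ (nhdsWithin 0 (Set.Ioi 0)) (nhds 1) ∧
      (∀ B : Set (lp (fun _ : Λ => ℝ) 2), Bornology.IsBounded B →
        ∀ z : lp (fun _ : Λ => ℝ) 2,
          Tendsto (fun α => ⨆ x ∈ B, ⟪D α x - x, z⟫) (nhdsWithin 0 (Set.Ioi 0)) (nhds 0)) ∧
      (∀ x : lp (fun _ : Λ => ℝ) 2, ∃ M : ℝ,
        ∀ᶠ α in nhdsWithin 0 (Set.Ioi 0), ‖x - D α x‖ / (1 - ℓ α) ≤ M) :=
  statement12_general κ hκ φ hfilter γ hγ0 ℓ hℓ hC1 hC2 s hs ψ hψ
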